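/- arXiv:2201.06840 — 3 statements merged into one kernel-verified Lean document; each statement's English description precedes it below -/
import Mathlib

section
/- Let A be a finite-dimensional non-commutative C*-algebra with a faithful tracial state τ. Then there exist unitaries u, v ∈ A such that |τ((u*v*uv)^k)| < 1 for every nonzero integer k. -/
/-!
A non-commuting pair forces a star projection `p` that does not commute with some `x`, so one of
the corners `p x (1 - p)`, `(1 - p) x p` is a nonzero element of square zero. Normalising it with
the functional calculus gives a partial isometry `s` with `s² = 0`, i.e. matrix units
`e₁₁ = s s⋆`, `e₂₂ = s⋆ s`, `e₁₂ = s` of a copy of `M₂(ℂ)` inside `A`. For the unitaries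
`u = e₁₂ + e₂₁ + (1 - e₁₁ - e₂₂)` and `v = diag(e^{i}, e^{-i}, 1)` one gets `u⋆ v⋆ u v = v²`, hence
`τ((u⋆ v⋆ u v)^k) = 1 - 2λ(1 - cos 2k)` with `λ = τ(s⋆ s) ∈ (0, 1/2]`. This lies in `(-1, 1)`
because `cos 2k ≠ ±1`, π being irrational.
-/

noncomputable section

open ComplexConjugate

lemma Real.abs_cos_intCast_lt_one {n : ℤ} (hn : n ≠ 0) : |Real.cos n| < 1 := by
  have hsin : Real.sin n ≠ 0 := by
    rintro hsin
    obtain ⟨m, hm⟩ := Real.sin_eq_zero_iff.mp hsin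
    have hm0 : (m : ℝ) ≠ 0 := by
      rintro h0
      rw [h0, zero_mul] at hm
      exact hn (by exact_mod_cast hm.symm)
    exact irrational_pi ⟨n / m, by push_cast; field_simp; linarith⟩
  rw [← sq_lt_one_iff_abs_lt_one]
  nlinarith [Real.cos_sq_add_sin_sq (n : ℝ), sq_pos_of_ne_zero hsin]

open Polynomial in
lemma spectrum.finite_of_finiteDimensional {K A : Type*} [Field K] [Ring A] [Algebra K A]
    [FiniteDimensional K A] (a : A) : (spectrum K a).Finite := by
  nontriviality A
  refine (finite_setOfPred_isRoot (minpoly.ne_zero (Algebra.IsIntegral.isIntegral a))).subset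
    fun x hx => ?_
  simpa [minpoly.aeval, spectrum.zero_eq] using
    spectrum.subset_polynomial_aeval a (minpoly K a) ⟨x, hx, rfl⟩

lemma spectrum.finite_real_of_finiteDimensional {A : Type*} [CStarAlgebra A]
    [FiniteDimensional ℂ A] (a : A) : (spectrum ℝ a).Finite := by
  rw [← spectrum.preimage_algebraMap ℂ]
  exact (spectrum.finite_of_finiteDimensional a).preimage Complex.ofReal_injective.injOn

lemma IsSelfAdjoint.commute_of_forall_isStarProjection {A : Type*} [CStarAlgebra A] {a x : A}
    (ha : IsSelfAdjoint a) (hfin : (spectrum ℝ a).Finite)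
    (hx : ∀ p : A, IsStarProjection p → Commute p x) : Commute a x := by
  classical
  have hcont (f : ℝ → ℝ) : ContinuousOn f (spectrum ℝ a) := hfin.continuousOn f
  set e : ℝ → A := fun t => cfc (fun u : ℝ => if u = t then (1 : ℝ) else 0) a
  have he (t : ℝ) : IsStarProjection (e t) := by
    refine ⟨?_, cfc_predicate _ a⟩
    rw [IsIdempotentElem, ← cfc_mul _ _ a (hcont _) (hcont _)]
    congr 1; funext u; split_ifs <;> simp
  have ha_sum : a = ∑ t ∈ hfin.toFinset, t • e t :=
    calc a = cfc (fun u : ℝ => u) a := (cfc_id' ℝ a).symm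
      _ = cfc (∑ t ∈ hfin.toFinset, fun u : ℝ => t * if u = t then (1 : ℝ) else 0) a :=
          cfc_congr fun u hu => by simp [hfin.mem_toFinset.mpr hu]
      _ = ∑ t ∈ hfin.toFinset, t • e t := by
          rw [cfc_sum _ a _ fun _ _ => hcont _]
          exact Finset.sum_congr rfl fun t _ => cfc_const_mul t _ a (hcont _)
  rw [ha_sum]
  exact Commute.sum_left _ _ _ fun t _ => (hx _ (he t)).smul_left t

lemma commute_of_forall_isStarProjection {A : Type*} [CStarAlgebra A] [FiniteDimensional ℂ A]
    (h : ∀ p : A, IsStarProjection p → ∀ x, Commute p x) (a b : A) : Commute a b := by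
  have hsa (c : selfAdjoint A) : Commute (c : A) b :=
    c.2.commute_of_forall_isStarProjection (spectrum.finite_real_of_finiteDimensional _)
      fun p hp => h p hp b
  rw [← realPart_add_I_smul_imaginaryPart a]
  exact (hsa _).add_left ((hsa _).smul_left _)

lemma IsStarProjection.exists_mul_self_eq_zero_of_not_commute {R : Type*} [Ring R] [Star R]
    {p x : R} (hp : IsStarProjection p) (hpx : ¬Commute p x) : ∃ y : R, y ≠ 0 ∧ y * y = 0 := by
  have corner_sq {a b : R} (hba : b * a = 0) : a * x * b * (a * x * b) = 0 := by
    simp [← mul_assoc, mul_assoc _ b a, hba]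
  by_contra! h
  have h₁ : p * x * (1 - p) = 0 := by_contra fun hne => h _ hne (corner_sq hp.one_sub_mul_self)
  have h₂ : (1 - p) * x * p = 0 := by_contra fun hne => h _ hne (corner_sq hp.mul_one_sub_self)
  refine hpx (sub_eq_zero.mp ?_)
  calc p * x - x * p = p * x * (1 - p) - (1 - p) * x * p := by noncomm_ring
    _ = 0 := by rw [h₁, h₂, sub_zero]

structure IsSqZeroPartialIsometry {A : Type*} [Ring A] [StarRing A] (s : A) : Prop where
  mul_star_mul : s * star s * s = s
  mul_self : s * s = 0

lemma exists_isSqZeroPartialIsometry {A : Type*} [CStarAlgebra A] [FiniteDimensional ℂ A]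
    {y : A} (hy : y ≠ 0) (hy2 : y * y = 0) : ∃ s : A, s ≠ 0 ∧ IsSqZeroPartialIsometry s := by
  set h := star y * y
  have hmul (f₁ f₂ : ℝ → ℝ) : cfc (fun t => f₁ t * f₂ t) h = cfc f₁ h * cfc f₂ h :=
    cfc_mul _ _ h ((spectrum.finite_real_of_finiteDimensional h).continuousOn _)
      ((spectrum.finite_real_of_finiteDimensional h).continuousOn _)
  have hid : cfc (fun t : ℝ => t) h = h := cfc_id' ℝ h
  -- `g t = 1 / √t` for `t > 0` and `g 0 = 0`, as `√0 = 0` and `0⁻¹ = 0`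
  set g : ℝ → ℝ := fun t => (√t)⁻¹
  have hg {t : ℝ} (ht : 0 ≤ t) :
      g t * g t * t * g t = g t ∧ t * (g t * g t) * t = t ∧ g t * g t * g t * t = g t := by
    rcases ht.eq_or_lt with rfl | ht
    · simp [g]
    · have : √t ≠ 0 := by positivity
      have hsq : √t * √t = t := Real.mul_self_sqrt ht.le
      refine ⟨?_, ?_, ?_⟩ <;> (simp only [g]; field_simp; nlinarith [hsq])
  have cfc_eq {f₁ f₂ : ℝ → ℝ} (hf : ∀ t, 0 ≤ t → f₁ t = f₂ t) : cfc f₁ h = cfc f₂ h :=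
    cfc_congr fun t ht => hf t (spectrum_star_mul_self_nonneg t ht)
  have h₁ : cfc g h * cfc g h * h * cfc g h = cfc g h := by
    simpa only [hmul, hid] using cfc_eq fun t ht => (hg ht).1
  have h₂ : h * (cfc g h * cfc g h) * h = h := by
    simpa only [hmul, hid] using cfc_eq fun t ht => (hg ht).2.1
  have h₃ : cfc g h * cfc g h * cfc g h * h = cfc g h := by
    simpa only [hmul, hid] using cfc_eq fun t ht => (hg ht).2.2
  have hg_sa : star (cfc g h) = cfc g h := (cfc_predicate g h).star_eq
  refine ⟨y * cfc g h, fun hs => hy ?_, ⟨?_, ?_⟩⟩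
  · rw [← CStarRing.star_mul_self_eq_zero_iff]
    change h = 0
    rw [← h₂]
    calc h * (cfc g h * cfc g h) * h = star y * (y * cfc g h * star (y * cfc g h)) * y := by
          simp only [h, star_mul, hg_sa, mul_assoc]
      _ = 0 := by rw [hs, zero_mul, mul_zero, zero_mul]
  · calc y * cfc g h * star (y * cfc g h) * (y * cfc g h)
          = y * (cfc g h * cfc g h * h * cfc g h) := by simp only [h, star_mul, hg_sa, mul_assoc]
      _ = y * cfc g h := by rw [h₁]
  · have hgy : cfc g h * y = 0 := by
      rw [← h₃]; simp only [h, mul_assoc, hy2, mul_zero]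
    rw [mul_assoc, ← mul_assoc (cfc g h), hgy, zero_mul, mul_zero]

namespace IsSqZeroPartialIsometry

section Ring

variable {A : Type*} [Ring A] [StarRing A] {s : A}

lemma star_mul_star_mul_star (hs : IsSqZeroPartialIsometry s) :
    star s * s * star s = star s := by
  simpa [mul_assoc] using congr(star $(hs.mul_star_mul))

lemma star_mul_star_self (hs : IsSqZeroPartialIsometry s) : star s * star s = 0 := by
  simpa using congr(star $(hs.mul_self))

lemma mul_star_mul_assoc (hs : IsSqZeroPartialIsometry s) : s * (star s * s) = s := by
  rw [← mul_assoc, hs.mul_star_mul]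

lemma star_mul_mul_star_assoc (hs : IsSqZeroPartialIsometry s) :
    star s * (s * star s) = star s := by
  rw [← mul_assoc, hs.star_mul_star_mul_star]

/- Right-associated forms of the relations: together with `mul_assoc` they let `simp` reduce
every word in `s` and `s⋆`. -/
lemma mul_mul_eq_zero (hs : IsSqZeroPartialIsometry s) (x : A) : s * (s * x) = 0 := by
  rw [← mul_assoc, hs.mul_self, zero_mul]

lemma star_mul_star_mul_eq_zero (hs : IsSqZeroPartialIsometry s) (x : A) :
    star s * (star s * x) = 0 := by
  rw [← mul_assoc, hs.star_mul_star_self, zero_mul]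

lemma isStarProjection_one_sub (hs : IsSqZeroPartialIsometry s) :
    IsStarProjection (1 - (s * star s + star s * s)) := by
  refine IsStarProjection.one_sub (IsStarProjection.add ?_ ?_ ?_)
  · exact ⟨by simp only [IsIdempotentElem, mul_assoc, hs.star_mul_mul_star_assoc],
      .mul_star_self s⟩
  · exact ⟨by simp only [IsIdempotentElem, mul_assoc, hs.mul_star_mul_assoc],
      .star_mul_self s⟩
  · simp only [mul_assoc, hs.star_mul_star_mul_eq_zero, mul_zero]

/-- The self-adjoint unitary exchanging the matrix units `e₁₁ = s s⋆` and `e₂₂ = s⋆ s`. -/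
def swap (s : A) : A := s + star s + (1 - s * star s - star s * s)

lemma star_swap : star (swap s) = swap s := by
  simp only [swap, star_add, star_sub, star_star, star_one, star_mul]
  abel

lemma swap_mul_self (hs : IsSqZeroPartialIsometry s) : swap s * swap s = 1 := by
  simp only [swap, add_mul, mul_add, sub_mul, mul_sub, mul_assoc, one_mul, mul_one,
    hs.mul_mul_eq_zero, hs.star_mul_star_mul_eq_zero, hs.mul_star_mul_assoc,
    hs.star_mul_mul_star_assoc, hs.mul_self, hs.star_mul_star_self]
  abel

def swapUnitary (hs : IsSqZeroPartialIsometry s) : unitary A :=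
  ⟨swap s, Unitary.mem_iff.mpr <| by rw [star_swap, and_self, hs.swap_mul_self]⟩

lemma inv_swapUnitary (hs : IsSqZeroPartialIsometry s) : hs.swapUnitary⁻¹ = hs.swapUnitary :=
  inv_eq_of_mul_eq_one_right (Subtype.ext hs.swap_mul_self)

end Ring

section Algebra

variable {A : Type*} [Ring A] [StarRing A] [Algebra ℂ A] {s : A}

/-- `diag(z, z̄, 1)` with respect to the matrix units `e₁₁ = s s⋆`, `e₂₂ = s⋆ s`. -/
def rot (s : A) (z : ℂ) : A := 1 + (z - 1) • (s * star s) + (conj z - 1) • (star s * s)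

lemma rot_mul (hs : IsSqZeroPartialIsometry s) (z w : ℂ) :
    rot s z * rot s w = rot s (z * w) := by
  simp only [rot, add_mul, mul_add, smul_mul_assoc, mul_smul_comm, mul_assoc, one_mul, mul_one,
    mul_zero, hs.mul_mul_eq_zero, hs.star_mul_star_mul_eq_zero, hs.mul_star_mul_assoc,
    hs.star_mul_mul_star_assoc, smul_zero, map_mul]
  module

lemma rot_one : rot s 1 = 1 := by simp [rot]

lemma star_rot [StarModule ℂ A] (z : ℂ) : star (rot s z) = rot s (conj z) := by
  simp [rot, star_add, star_smul]

lemma swap_mul_rot_mul_swap (hs : IsSqZeroPartialIsometry s) (z : ℂ) :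
    swap s * rot s z * swap s = rot s (conj z) := by
  simp only [swap, rot, add_mul, mul_add, sub_mul, mul_sub, smul_mul_assoc, mul_smul_comm,
    mul_assoc, one_mul, mul_one, mul_zero, hs.mul_mul_eq_zero, hs.star_mul_star_mul_eq_zero,
    hs.mul_star_mul_assoc, hs.star_mul_mul_star_assoc, hs.mul_self, hs.star_mul_star_self,
    smul_zero, smul_sub, smul_add, Complex.conj_conj]
  module

variable [StarModule ℂ A]

def rotHom (hs : IsSqZeroPartialIsometry s) : Circle →* unitary A where
  toFun z := ⟨rot s z, Unitary.mem_iff.mpr <| by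
    simp only [star_rot, rot_mul hs, ← Circle.coe_inv_eq_conj, ← Circle.coe_mul, inv_mul_cancel,
      mul_inv_cancel, Circle.coe_one, rot_one, and_self]⟩
  map_one' := Subtype.ext rot_one
  map_mul' z w := Subtype.ext (rot_mul hs z w).symm

lemma coe_rotHom (hs : IsSqZeroPartialIsometry s) (z : Circle) :
    (hs.rotHom z : A) = rot s z := rfl

lemma swapUnitary_mul_inv_rotHom_mul_swapUnitary (hs : IsSqZeroPartialIsometry s) (z : Circle) :
    hs.swapUnitary * (hs.rotHom z)⁻¹ * hs.swapUnitary = hs.rotHom z := by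
  refine Subtype.ext ?_
  rw [← map_inv]
  change swap s * rot s _ * swap s = rot s _
  rw [hs.swap_mul_rot_mul_swap, Circle.coe_inv_eq_conj, Complex.conj_conj]

lemma commutator_swapUnitary_rotHom (hs : IsSqZeroPartialIsometry s) (z : Circle) :
    hs.swapUnitary⁻¹ * (hs.rotHom z)⁻¹ * hs.swapUnitary * hs.rotHom z = hs.rotHom z ^ 2 := by
  rw [hs.inv_swapUnitary, hs.swapUnitary_mul_inv_rotHom_mul_swapUnitary, sq]

end Algebra

lemma norm_map_rot_lt_one {A : Type*} [Ring A] [StarRing A] [Algebra ℂ A] (τ : A →ₗ[ℂ] ℂ)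
    (hτ1 : τ 1 = 1) (htrace : ∀ a b : A, τ (a * b) = τ (b * a))
    (hpos : ∀ a : A, 0 ≤ (τ (star a * a)).re ∧ (τ (star a * a)).im = 0)
    (hfaithful : ∀ a : A, τ (star a * a) = 0 → a = 0)
    {s : A} (hs : IsSqZeroPartialIsometry s) (hs0 : s ≠ 0) {z : ℂ} (hz : |z.re| < 1) :
    ‖τ (rot s z)‖ < 1 := by
  set l := (τ (star s * s)).re
  have hτQ : τ (star s * s) = l := Complex.ext rfl (hpos s).2
  have hτP : τ (s * star s) = l := (htrace _ _).trans hτQ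
  have hl : 0 < l := (hpos s).1.lt_of_ne fun h0 =>
    hs0 (hfaithful s (by rw [hτQ]; exact_mod_cast h0.symm))
  have hl2 : 2 * l ≤ 1 := by
    have hR := hs.isStarProjection_one_sub
    have := (hpos (1 - (s * star s + star s * s))).1
    rw [hR.isSelfAdjoint.star_eq, hR.isIdempotentElem.eq, map_sub, map_add, hτ1, hτP, hτQ] at this
    simp only [Complex.sub_re, Complex.one_re, Complex.add_re, Complex.ofReal_re] at this
    linarith
  have hval : τ (rot s z) = ((1 - 2 * l * (1 - z.re) : ℝ) : ℂ) := by
    simp only [rot, map_add, map_smul, hτ1, hτP, hτQ, smul_eq_mul]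
    apply Complex.ext <;> simp
    ring
  rw [hval, Complex.norm_real, Real.norm_eq_abs, abs_lt]
  obtain ⟨hz₁, hz₂⟩ := abs_lt.mp hz
  constructor <;> nlinarith

end IsSqZeroPartialIsometry

/-- A finite-dimensional non-commutative C*-algebra with a faithful
tracial state `τ` contains unitaries `u, v` such that `|τ((u*v*uv)^k)| < 1` for every
nonzero integer `k`.  (In the unitary group, `u⁻¹ = u*`, so the element below is
`u*v*uv`.) -/
theorem exists_unitaries_trace_commutator_lt_one
    (A : Type*) [NormedRing A] [StarRing A] [CStarRing A] [NormedAlgebra ℂ A]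
    [StarModule ℂ A] [CompleteSpace A] [FiniteDimensional ℂ A]
    (hnc : ∃ a b : A, a * b ≠ b * a)
    (τ : A →ₗ[ℂ] ℂ)
    (hτ1 : τ 1 = 1)
    (htrace : ∀ a b : A, τ (a * b) = τ (b * a))
    (hpos : ∀ a : A, 0 ≤ (τ (star a * a)).re ∧ (τ (star a * a)).im = 0)
    (hfaithful : ∀ a : A, τ (star a * a) = 0 → a = 0) :
    ∃ u v : unitary A, ∀ k : ℤ, k ≠ 0 →
      ‖τ (((u⁻¹ * v⁻¹ * u * v) ^ k : unitary A) : A)‖ < 1 := by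
  let _ : CStarAlgebra A := {}
  obtain ⟨p, hp, x, hpx⟩ : ∃ p : A, IsStarProjection p ∧ ∃ x, ¬Commute p x := by
    by_contra! h
    obtain ⟨a, b, hab⟩ := hnc
    exact hab (commute_of_forall_isStarProjection h a b)
  obtain ⟨y, hy, hy2⟩ := hp.exists_mul_self_eq_zero_of_not_commute hpx
  obtain ⟨s, hs0, hs⟩ := exists_isSqZeroPartialIsometry hy hy2
  refine ⟨hs.swapUnitary, hs.rotHom (Circle.exp 1), fun k hk => ?_⟩
  rw [hs.commutator_swapUnitary_rotHom, ← zpow_natCast, ← zpow_mul, ← map_zpow,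
    ← Circle.exp_intCast_mul, mul_one, hs.coe_rotHom]
  refine hs.norm_map_rot_lt_one τ hτ1 htrace hpos hfaithful hs0 ?_
  rw [Circle.coe_exp, Complex.exp_ofReal_mul_I_re]
  exact Real.abs_cos_intCast_lt_one (by positivity)

end
end

section
/- Let G be a group with subgroup H forming a Hecke pair with R(x) = [H : H ∩ x^{-1}Hx] satisfying R(x) = R(x^{-1}) for all x ∈ G. Then the vector state f ↦ ⟨λ(f)δ_H, δ_H⟩ on the Hecke algebra H(G,H) acting on ℓ²(H\G) is a tracial state: ⟨λ(f*g)δ_H, δ_H⟩ = ⟨λ(g*f)δ_H, δ_H⟩ for all f, g ∈ H(G,H). -/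
/-!
Evaluating at `δ_H`, the two sides are `Σ_{Hy ∈ H\G} φ(y)` and `Σ_{Hy ∈ H\G} φ(y⁻¹)`
for the bi-invariant, finitely supported `φ(y) = f(y⁻¹) g(y)`. Grouping the right cosets by
double coset, and using that `HxH` contains exactly `R(x)` right cosets, the first sum is
`Σ_{HxH} R(x) φ(x)` and the second is `Σ_{HxH} R(x⁻¹) φ(x)`; they agree as `R(x) = R(x⁻¹)`.
-/

noncomputable section
open scoped BigOperators Classical

variable {G : Type*} [Group G]

/-- `R(x) = [H : H ∩ x⁻¹Hx]` (with value `0` when the index is infinite). -/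
def heckeIndex (H : Subgroup G) (x : G) : ℕ :=
  (H.map (MulAut.conj x⁻¹).toMonoidHom).relIndex H

/-- The left action of `f` on functions on the right coset space `H\G`. -/
def heckeAct (H : Subgroup G) (f : G → ℂ)
    (ξ : Quotient (QuotientGroup.rightRel H) → ℂ) :
    Quotient (QuotientGroup.rightRel H) → ℂ :=
  fun c => ∑ᶠ d : Quotient (QuotientGroup.rightRel H),
    f (Quotient.out c * (Quotient.out d)⁻¹) * ξ d

/-- Convolution of Hecke algebra elements: `(f*g)(x) = Σ_{Hy ∈ H\G} f(xy⁻¹) g(y)`. -/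
def heckeConv (H : Subgroup G) (f g : G → ℂ) : G → ℂ :=
  fun x => ∑ᶠ d : Quotient (QuotientGroup.rightRel H),
    f (x * (Quotient.out d)⁻¹) * g (Quotient.out d)

/-- `δ_H ∈ ℓ²(H\G)`, the indicator of the coset `H`. -/
def deltaH (H : Subgroup G) : Quotient (QuotientGroup.rightRel H) → ℂ :=
  fun c => if c = Quotient.mk (QuotientGroup.rightRel H) (1 : G) then 1 else 0

open DoubleCoset Function

/-- For infinite `α` both sides are junk zeros. -/
theorem finsum_const_eq_natCard_smul {α M : Type*} [AddCommMonoid M] (c : M) :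
    ∑ᶠ _ : α, c = Nat.card α • c := by
  rcases finite_or_infinite α with hα | hα
  · have := Fintype.ofFinite α
    rw [finsum_eq_sum_of_fintype, Finset.sum_const, Finset.card_univ, Nat.card_eq_fintype_card]
  · rw [Nat.card_eq_zero_of_infinite, zero_smul]
    by_cases hc : c = 0
    · simp [hc]
    · exact finsum_of_infinite_support (by simpa [support_const hc] using Set.infinite_univ)

theorem finsum_fiberwise {α β M : Type*} [AddCommMonoid M] {ψ : α → M}
    (hψ : (support ψ).Finite) (π : α → β) :
    ∑ᶠ b, ∑ᶠ (a) (_ : π a = b), ψ a = ∑ᶠ a, ψ a := by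
  classical
  set s := hψ.toFinset
  have hfiber : ∀ b, ∑ᶠ (a) (_ : π a = b), ψ a = ∑ a ∈ s with π a = b, ψ a := fun b =>
    finsum_cond_eq_sum_of_cond_iff ψ fun {a} ha => by simp [s, ha]
  rw [finsum_congr hfiber, finsum_eq_sum_of_support_subset _ (s := s.image π),
    Finset.sum_fiberwise_of_maps_to (fun a ha => Finset.mem_image_of_mem π ha),
    finsum_eq_sum_of_support_subset _ hψ.coe_toFinset.ge]
  intro b hb
  obtain ⟨a, ha, -⟩ := Finset.exists_ne_zero_of_sum_ne_zero hb
  rw [Finset.mem_filter] at ha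
  exact Finset.mem_image.2 ⟨a, ha.1, ha.2⟩

theorem inv_mem_doubleCoset_iff {H K : Subgroup G} {a x : G} :
    a⁻¹ ∈ doubleCoset x H K ↔ a ∈ doubleCoset x⁻¹ K H := by
  simp only [mem_doubleCoset]
  constructor
  · rintro ⟨h, hh, k, hk, e⟩
    exact ⟨k⁻¹, K.inv_mem hk, h⁻¹, H.inv_mem hh, by rw [← inv_inv a, e]; group⟩
  · rintro ⟨k, hk, h, hh, rfl⟩
    exact ⟨h⁻¹, H.inv_mem hh, k⁻¹, K.inv_mem hk, by group⟩

theorem mk_eq_iff_mem_doubleCoset_out {H K : Subgroup G} {a : G}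
    {D : DoubleCoset.Quotient (H : Set G) K} : mk H K a = D ↔ a ∈ doubleCoset D.out H K :=
  (mem_quotToDoubleCoset_iff D a).symm

def IsBiInvariant {M : Type*} (H : Subgroup G) (ψ : G → M) : Prop :=
  ∀ h ∈ H, ∀ h' ∈ H, ∀ x, ψ (h * x * h') = ψ x

namespace IsBiInvariant

variable {M : Type*} {H : Subgroup G} {ψ : G → M}

theorem comp_inv (hψ : IsBiInvariant H ψ) : IsBiInvariant H fun x => ψ x⁻¹ := by
  intro h hh h' hh' x
  simpa [mul_assoc] using hψ h'⁻¹ (H.inv_mem hh') h⁻¹ (H.inv_mem hh) x⁻¹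

theorem mul [Mul M] {χ : G → M} (hψ : IsBiInvariant H ψ) (hχ : IsBiInvariant H χ) :
    IsBiInvariant H (ψ * χ) := fun h hh h' hh' x => by
  simp only [Pi.mul_apply, hψ h hh h' hh' x, hχ h hh h' hh' x]

theorem eq_of_mem_doubleCoset (hψ : IsBiInvariant H ψ) {x y : G} (hy : y ∈ doubleCoset x H H) :
    ψ y = ψ x := by
  obtain ⟨a, ha, b, hb, rfl⟩ := mem_doubleCoset.1 hy
  exact hψ a ha b hb x

end IsBiInvariant

theorem rightRel_mk_eq_mk_iff {H : Subgroup G} {a b : G} :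
    Quotient.mk (QuotientGroup.rightRel H) a = Quotient.mk _ b ↔ b * a⁻¹ ∈ H :=
  Quotient.eq.trans QuotientGroup.rightRel_apply

theorem out_mem_doubleCoset_iff {H : Subgroup G} {x : G}
    {d : Quotient (QuotientGroup.rightRel H)} :
    d.out ∈ doubleCoset x H H ↔ ∃ h : H, Quotient.mk _ (x * h) = d := by
  rw [mem_doubleCoset]
  constructor
  · rintro ⟨a, ha, b, hb, e⟩
    refine ⟨⟨b, hb⟩, ?_⟩
    rw [← Quotient.out_eq d, rightRel_mk_eq_mk_iff, e]
    simpa [mul_assoc] using ha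
  · rintro ⟨h, rfl⟩
    have hk := rightRel_mk_eq_mk_iff.1
      (Quotient.out_eq (Quotient.mk (QuotientGroup.rightRel H) (x * h)))
    exact ⟨_, H.inv_mem hk, h, h.2, by group⟩

/-- `h ↦ Hxh` maps `H` onto the right cosets contained in `HxH`, with the right cosets of
`H ∩ x⁻¹Hx` as fibres. -/
theorem natCard_out_mem_doubleCoset (H : Subgroup G) (x : G) :
    Nat.card {d : Quotient (QuotientGroup.rightRel H) // d.out ∈ doubleCoset x H H} =
      heckeIndex H x := by
  let f : H → {d : Quotient (QuotientGroup.rightRel H) // d.out ∈ doubleCoset x H H} :=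
    fun h => ⟨Quotient.mk _ (x * h), out_mem_doubleCoset_iff.2 ⟨h, rfl⟩⟩
  have hf : Surjective f := fun ⟨_, hd⟩ => by
    obtain ⟨h, rfl⟩ := out_mem_doubleCoset_iff.1 hd
    exact ⟨h, rfl⟩
  have hker : ∀ h₁ h₂ : H, QuotientGroup.rightRel
      ((H.map (MulAut.conj x⁻¹).toMonoidHom).subgroupOf H) h₁ h₂ ↔ f h₁ = f h₂ := by
    intro h₁ h₂
    rw [QuotientGroup.rightRel_apply, Subgroup.mem_subgroupOf, Subgroup.mem_map_equiv,
      Subtype.ext_iff, rightRel_mk_eq_mk_iff]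
    simp [mul_assoc]
  rw [← Nat.card_congr
      ((Quotient.congrRight hker).trans (Setoid.quotientKerEquivOfSurjective f hf)),
    Nat.card_congr (QuotientGroup.quotientRightRelEquivQuotientLeftRel _)]
  rfl

theorem finsum_out_mem_doubleCoset {M : Type*} [AddCommMonoid M] {H : Subgroup G} {ψ : G → M}
    (hψ : IsBiInvariant H ψ) (x : G) :
    ∑ᶠ (d : Quotient (QuotientGroup.rightRel H)) (_ : d.out ∈ doubleCoset x H H), ψ d.out =
      heckeIndex H x • ψ x := by
  rw [← finsum_subtype_eq_finsum_cond, ← natCard_out_mem_doubleCoset,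
    ← finsum_const_eq_natCard_smul]
  exact finsum_congr fun d => hψ.eq_of_mem_doubleCoset d.2

theorem finsum_out_inv_eq_finsum_out {M : Type*} [AddCommMonoid M] {H : Subgroup G}
    (hsym : ∀ x : G, heckeIndex H x = heckeIndex H x⁻¹) {φ : G → M}
    (hφ : IsBiInvariant H φ) (hfin : (support φ).Finite) :
    ∑ᶠ d : Quotient (QuotientGroup.rightRel H), φ d.out⁻¹ =
      ∑ᶠ d : Quotient (QuotientGroup.rightRel H), φ d.out := by
  have hfin_inv : (support fun d : Quotient (QuotientGroup.rightRel H) => φ d.out⁻¹).Finite :=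
    hfin.preimage (inv_injective.comp Quotient.out_injective).injOn
  have hfin_out : (support fun d : Quotient (QuotientGroup.rightRel H) => φ d.out).Finite :=
    hfin.preimage Quotient.out_injective.injOn
  rw [← finsum_fiberwise hfin_inv fun d => mk H H d.out⁻¹,
    ← finsum_fiberwise hfin_out fun d => mk H H d.out]
  refine finsum_congr fun D => ?_
  simp only [mk_eq_iff_mem_doubleCoset_out, inv_mem_doubleCoset_iff]
  rw [finsum_out_mem_doubleCoset hφ.comp_inv, finsum_out_mem_doubleCoset hφ, inv_inv, ← hsym]

theorem heckeAct_deltaH_mk_one (H : Subgroup G) (F : G → ℂ) :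
    heckeAct H F (deltaH H) (Quotient.mk _ 1) = F 1 := by
  rw [heckeAct, finsum_eq_single _ (Quotient.mk _ 1) fun d hd => by simp [deltaH, hd]]
  simp [deltaH]

theorem heckeConv_apply_one (H : Subgroup G) (f g : G → ℂ) :
    heckeConv H f g 1 = ∑ᶠ d : Quotient (QuotientGroup.rightRel H), f d.out⁻¹ * g d.out := by
  simp [heckeConv]

theorem hecke_vector_state_tracial_general
    (H : Subgroup G)
    (hsym : ∀ x : G, heckeIndex H x = heckeIndex H x⁻¹)
    (f g : G → ℂ)
    (hgsupp : (Function.support g).Finite)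
    (hfbi : ∀ h ∈ H, ∀ h' ∈ H, ∀ x : G, f (h * x * h') = f x)
    (hgbi : ∀ h ∈ H, ∀ h' ∈ H, ∀ x : G, g (h * x * h') = g x) :
    heckeAct H (heckeConv H f g) (deltaH H)
        (Quotient.mk (QuotientGroup.rightRel H) (1 : G)) =
      heckeAct H (heckeConv H g f) (deltaH H)
        (Quotient.mk (QuotientGroup.rightRel H) (1 : G)) := by
  have hφ : IsBiInvariant H fun y => f y⁻¹ * g y :=
    IsBiInvariant.comp_inv (ψ := f) hfbi |>.mul hgbi
  have hfin : (support fun y => f y⁻¹ * g y).Finite :=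
    hgsupp.subset (support_mul_subset_right _ _)
  rw [heckeAct_deltaH_mk_one, heckeAct_deltaH_mk_one, heckeConv_apply_one, heckeConv_apply_one]
  simpa only [inv_inv, mul_comm] using (finsum_out_inv_eq_finsum_out hsym hφ hfin).symm

/-- If `R(x) = R(x⁻¹)` for all `x` (and all are finite), then the
vector state at `δ_H` is tracial on the Hecke algebra:
`⟨λ(f*g)δ_H, δ_H⟩ = ⟨λ(g*f)δ_H, δ_H⟩`. -/
theorem hecke_vector_state_tracial
    (H : Subgroup G)
    (hfin : ∀ x : G, heckeIndex H x ≠ 0)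
    (hsym : ∀ x : G, heckeIndex H x = heckeIndex H x⁻¹)
    (f g : G → ℂ)
    (hfsupp : (Function.support f).Finite) (hgsupp : (Function.support g).Finite)
    (hfbi : ∀ h ∈ H, ∀ h' ∈ H, ∀ x : G, f (h * x * h') = f x)
    (hgbi : ∀ h ∈ H, ∀ h' ∈ H, ∀ x : G, g (h * x * h') = g x) :
    heckeAct H (heckeConv H f g) (deltaH H)
        (Quotient.mk (QuotientGroup.rightRel H) (1 : G)) =
      heckeAct H (heckeConv H g f) (deltaH H)
        (Quotient.mk (QuotientGroup.rightRel H) (1 : G)) :=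
  hecke_vector_state_tracial_general H hsym f g hgsupp hfbi hgbi

end
end

section
/- For d ≥ 2 and l ≥ 3, the Hecke algebra H(S_{d^l}, Q_l) is non-commutative, where Q_l ≤ S_{d^l} is the image of Aut(T_{d,d}) acting on the d^l vertices at level l of the rooted d-regular tree T_{d,d} (i.e., Q_l is the iterated wreath product S_d ≀ S_d ≀ ... ≀ S_d, l times, in its imprimitive action on d^l points). Equivalently, (S_{d^l}, Q_l) is not a Gelfand pair. -/
noncomputable section
open scoped Classical

/-- The leaves of the depth-`l` rooted `d`-ary tree: there are `d^l` of them. -/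
abbrev Leaves (d l : ℕ) : Type := Fin l → Fin d

/-- The automorphism group `Q_l` of the depth-`l` rooted `d`-ary tree in its action on
the `d^l` leaves (the iterated wreath product `S_d ≀ ⋯ ≀ S_d`): those permutations of
the leaves which preserve agreement of prefixes at every level. -/
def treeAutFinset (d l : ℕ) : Finset (Equiv.Perm (Leaves d l)) :=
  Finset.univ.filter fun σ =>
    ∀ m ≤ l, ∀ x y : Leaves d l,
      (∀ i : Fin l, (i : ℕ) < m → x i = y i) ↔
        (∀ i : Fin l, (i : ℕ) < m → σ x i = σ y i)

/-- The averaging idempotent `p_{Q_l}` in the group algebra `ℂ[S_{d^l}]`. -/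
def pQ (d l : ℕ) : MonoidAlgebra ℂ (Equiv.Perm (Leaves d l)) :=
  ((treeAutFinset d l).card : ℂ)⁻¹ •
    ∑ σ ∈ treeAutFinset d l, MonoidAlgebra.single σ 1


/-! If `y * x` is not of the form `q₁ x q₂ q₃ y q₄` with all `qᵢ ∈ Q`, then `p x p` and `p y p`
do not commute, since the coefficient of `y * x` in `(p x p)(p y p)` counts exactly such
factorisations, while in `(p y p)(p x p)` it is positive.

For the tree group, elements of `Q` preserve, for each `m`, agreement of leaves in their first `m`
coordinates. Take two colours `a ≠ b`, let `x` transpose the leaves `aaa…a` and `aba…a`, and let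
`y` swap `a` and `b` in coordinate `0` of the leaves whose coordinate `1` is `a`. Then `y` preserves
agreement in the first two coordinates and `x` agreement in the first one, so every element of
`Q x Q Q y Q` sends the leaves `aaa…a` and `aab…a` (which needs `l ≥ 3`) to leaves with the same
first coordinate, whereas `y x` sends them to `aba…a` and `bab…a`. -/

open MonoidAlgebra Finset

section Hecke

variable {k G : Type*} [Field k] [Group G]

variable (k) in
def averageOver (Q : Finset G) : MonoidAlgebra k G :=
  (#Q : k)⁻¹ • ∑ q ∈ Q, single q 1

lemma averageOver_mul_single_mul_averageOver (Q : Finset G) (x : G) :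
    averageOver k Q * single x 1 * averageOver k Q =
      (#Q : k)⁻¹ ^ 2 • ∑ q ∈ Q ×ˢ Q, single (q.1 * x * q.2) (1 : k) := by
  rw [averageOver, smul_mul_assoc, smul_mul_assoc, mul_smul_comm, smul_smul, ← sq, sum_mul,
    sum_mul_sum, ← sum_product']
  simp only [single_mul_single, one_mul]

lemma coeff_averageOver_sandwich_mul_sandwich (Q : Finset G) (x y g : G) :
    ((averageOver k Q * single x 1 * averageOver k Q) *
        (averageOver k Q * single y 1 * averageOver k Q)).coeff g =
      (#Q : k)⁻¹ ^ 4 *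
        #{q ∈ (Q ×ˢ Q) ×ˢ (Q ×ˢ Q) | q.1.1 * x * q.1.2 * (q.2.1 * y * q.2.2) = g} := by
  rw [averageOver_mul_single_mul_averageOver, averageOver_mul_single_mul_averageOver,
    smul_mul_smul_comm, sum_mul_sum, ← sum_product', coeff_smul_apply, coeff_sum,
    Finsupp.finsetSum_apply, ← pow_add, smul_eq_mul]
  simp only [single_mul_single, one_mul, coeff_single, Finsupp.single_apply]
  rw [sum_boole]

theorem averageOver_sandwich_mul_ne [CharZero k] {Q : Finset G} (hQ : 1 ∈ Q) {x y : G}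
    (h : ∀ q ∈ (Q ×ˢ Q) ×ˢ (Q ×ˢ Q), q.1.1 * x * q.1.2 * (q.2.1 * y * q.2.2) ≠ y * x) :
    (averageOver k Q * single x 1 * averageOver k Q) *
        (averageOver k Q * single y 1 * averageOver k Q) ≠
      (averageOver k Q * single y 1 * averageOver k Q) *
        (averageOver k Q * single x 1 * averageOver k Q) := by
  intro heq
  have hcoeff := congrArg (fun a => a.coeff (y * x)) heq
  simp only [coeff_averageOver_sandwich_mul_sandwich] at hcoeff
  have hQ0 : (#Q : k) ≠ 0 := Nat.cast_ne_zero.mpr (card_ne_zero_of_mem hQ)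
  have hempty : #{q ∈ (Q ×ˢ Q) ×ˢ (Q ×ˢ Q) | q.1.1 * x * q.1.2 * (q.2.1 * y * q.2.2) = y * x} = 0 :=
    card_eq_zero.mpr (filter_false_of_mem h)
  have hpos : #{q ∈ (Q ×ˢ Q) ×ˢ (Q ×ˢ Q) | q.1.1 * y * q.1.2 * (q.2.1 * x * q.2.2) = y * x} ≠ 0 :=
    card_ne_zero_of_mem (a := ((1, 1), (1, 1))) (mem_filter.mpr ⟨by simp [hQ], by group⟩)
  rw [hempty, Nat.cast_zero, mul_zero, eq_comm, mul_eq_zero] at hcoeff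
  exact hcoeff.elim (pow_ne_zero _ (inv_ne_zero hQ0)) (Nat.cast_ne_zero.mpr hpos)

end Hecke

section TreeInvariant

variable {d l : ℕ}

def AgreeBelow (m : ℕ) (v w : Leaves d l) : Prop :=
  ∀ i : Fin l, (i : ℕ) < m → v i = w i

lemma AgreeBelow.mono {m m' : ℕ} (h : m' ≤ m) {v w : Leaves d l} (hvw : AgreeBelow m v w) :
    AgreeBelow m' v w :=
  fun i hi => hvw i (hi.trans_le h)

def PreservesAgreeBelow (m : ℕ) (σ : Equiv.Perm (Leaves d l)) : Prop :=
  ∀ v w, AgreeBelow m v w → AgreeBelow m (σ v) (σ w)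

lemma PreservesAgreeBelow.mul {m : ℕ} {σ τ : Equiv.Perm (Leaves d l)}
    (hσ : PreservesAgreeBelow m σ) (hτ : PreservesAgreeBelow m τ) :
    PreservesAgreeBelow m (σ * τ) :=
  fun v w h => hσ _ _ (hτ v w h)

lemma PreservesAgreeBelow.of_agreeBelow_self {m : ℕ} {σ : Equiv.Perm (Leaves d l)}
    (h : ∀ w, AgreeBelow m (σ w) w) : PreservesAgreeBelow m σ :=
  fun v w hvw i hi => (h v i hi).trans ((hvw i hi).trans (h w i hi).symm)

lemma preservesAgreeBelow_of_mem_treeAutFinset {σ : Equiv.Perm (Leaves d l)}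
    (hσ : σ ∈ treeAutFinset d l) {m : ℕ} (hm : m ≤ l) : PreservesAgreeBelow m σ :=
  fun v w => ((mem_filter.mp hσ).2 m hm v w).mp

lemma one_mem_treeAutFinset : 1 ∈ treeAutFinset d l := by
  simp [treeAutFinset]

lemma agreeBelow_swap_update_apply (v : Leaves d l) (i : Fin l) (c : Fin d) (w : Leaves d l) :
    AgreeBelow i (Equiv.swap v (Function.update v i c) w) w := by
  intro j hj
  have hji : j ≠ i := Fin.ne_of_lt hj
  rw [Equiv.swap_apply_def]
  split_ifs with hv hu
  · rw [hv, Function.update_of_ne hji]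
  · rw [hu, Function.update_of_ne hji]
  · rfl

def swapCoordWhen (i j : Fin l) (hij : i ≠ j) (a b : Fin d) : Equiv.Perm (Leaves d l) :=
  Function.Involutive.toPerm
    (fun w => if w j = a then Function.update w i (Equiv.swap a b (w i)) else w) <| by
      intro w
      by_cases hw : w j = a
      · simp [hw, Function.update_of_ne hij.symm]
      · simp [hw]

lemma swapCoordWhen_apply (i j : Fin l) (hij : i ≠ j) (a b : Fin d) (w : Leaves d l) :
    swapCoordWhen i j hij a b w =
      if w j = a then Function.update w i (Equiv.swap a b (w i)) else w :=
  rfl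

lemma preservesAgreeBelow_swapCoordWhen {i j : Fin l} (hij : i ≠ j) (a b : Fin d) {m : ℕ}
    (hi : (i : ℕ) < m) (hj : (j : ℕ) < m) : PreservesAgreeBelow m (swapCoordWhen i j hij a b) := by
  intro v w hvw k hk
  simp only [swapCoordWhen_apply, hvw j hj, hvw i hi]
  split_ifs
  · simp only [Function.update_apply, hvw k hk]
  · exact hvw k hk

lemma double_coset_mul_ne_of_preservesAgreeBelow {m m' : ℕ} (hm' : m' ≤ m) (hm : m ≤ l)
    {x y : Equiv.Perm (Leaves d l)} (hx : PreservesAgreeBelow m' x)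
    (hy : PreservesAgreeBelow m y) {v w : Leaves d l} (hvw : AgreeBelow m v w)
    (hyx : ¬ AgreeBelow m' (y (x v)) (y (x w))) :
    ∀ q ∈ (treeAutFinset d l ×ˢ treeAutFinset d l) ×ˢ (treeAutFinset d l ×ˢ treeAutFinset d l),
      q.1.1 * x * q.1.2 * (q.2.1 * y * q.2.2) ≠ y * x := by
  rintro ⟨⟨q₁, q₂⟩, q₃, q₄⟩ hq heq
  simp only [mem_product] at hq
  obtain ⟨⟨h₁, h₂⟩, h₃, h₄⟩ := hq
  have hinner : PreservesAgreeBelow m (q₂ * (q₃ * y * q₄)) :=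
    (preservesAgreeBelow_of_mem_treeAutFinset h₂ hm).mul
      (((preservesAgreeBelow_of_mem_treeAutFinset h₃ hm).mul hy).mul
        (preservesAgreeBelow_of_mem_treeAutFinset h₄ hm))
  have houter : PreservesAgreeBelow m' (q₁ * x) :=
    (preservesAgreeBelow_of_mem_treeAutFinset h₁ (hm'.trans hm)).mul hx
  apply hyx
  rw [← Equiv.Perm.mul_apply y, ← Equiv.Perm.mul_apply y, ← heq]
  exact houter _ _ ((hinner v w hvw).mono hm')

theorem treeAut_double_coset_mul_ne {i₀ i₁ i₂ : Fin l} (h₀₁ : i₀ < i₁) (h₁₂ : i₁ < i₂)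
    {a b : Fin d} (hab : a ≠ b) :
    let x := Equiv.swap (fun _ => a) (Function.update (fun _ => a) i₁ b)
    let y := swapCoordWhen i₀ i₁ h₀₁.ne a b
    ∀ q ∈ (treeAutFinset d l ×ˢ treeAutFinset d l) ×ˢ (treeAutFinset d l ×ˢ treeAutFinset d l),
      q.1.1 * x * q.1.2 * (q.2.1 * y * q.2.2) ≠ y * x := by
  intro x y
  refine double_coset_mul_ne_of_preservesAgreeBelow (m := i₂) (m' := i₀ + 1)
    (by omega) i₂.is_lt.le
    (.of_agreeBelow_self fun w => (agreeBelow_swap_update_apply _ _ _ w).mono (by omega))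
    (preservesAgreeBelow_swapCoordWhen _ a b (by omega) (by omega))
    (v := fun _ => a) (w := Function.update (fun _ => a) i₂ b) ?_ ?_
  · intro k hk
    exact (Function.update_of_ne (Fin.ne_of_lt hk) b fun _ => a).symm
  · have hv : y (x fun _ => a) = Function.update (fun _ => a) i₁ b := by
      simp [x, y, swapCoordWhen_apply, hab.symm]
    have hw : y (x (Function.update (fun _ => a) i₂ b)) =
        Function.update (Function.update (fun _ => a) i₂ b) i₀ b := by
      have hxw : x (Function.update (fun _ => a) i₂ b) = Function.update (fun _ => a) i₂ b := by
        refine Equiv.swap_apply_of_ne_of_ne (fun h => hab ?_) (fun h => hab ?_)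
        · simpa using (congrFun h i₂).symm
        · simpa [h₁₂.ne, h₁₂.ne'] using congrFun h i₁
      simp [hxw, y, swapCoordWhen_apply, h₁₂.ne, (h₀₁.trans h₁₂).ne]
    intro h
    have := h i₀ (by omega)
    simp [hv, hw, h₀₁.ne, hab] at this

end TreeInvariant

/-- For `d ≥ 2` and `l ≥ 3` the Hecke algebra
`H(S_{d^l}, Q_l) = p_{Q_l} ℂ[S_{d^l}] p_{Q_l}` is non-commutative; equivalently,
`(S_{d^l}, Q_l)` is not a Gelfand pair. -/
theorem hecke_algebra_noncommutative
    (d l : ℕ) (hd : 2 ≤ d) (hl : 3 ≤ l) :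
    ∃ a b : MonoidAlgebra ℂ (Equiv.Perm (Leaves d l)),
      (pQ d l * a * pQ d l) * (pQ d l * b * pQ d l) ≠
        (pQ d l * b * pQ d l) * (pQ d l * a * pQ d l) := by
  have h₀₁ : (⟨0, by omega⟩ : Fin l) < ⟨1, by omega⟩ := Fin.mk_lt_mk.mpr zero_lt_one
  have h₁₂ : (⟨1, by omega⟩ : Fin l) < ⟨2, by omega⟩ := Fin.mk_lt_mk.mpr one_lt_two
  have hab : (⟨0, by omega⟩ : Fin d) ≠ ⟨1, by omega⟩ := Fin.ne_of_lt (Fin.mk_lt_mk.mpr zero_lt_one)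
  exact ⟨_, _, averageOver_sandwich_mul_ne one_mem_treeAutFinset
    (treeAut_double_coset_mul_ne h₀₁ h₁₂ hab)⟩

end
end
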